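/- Let L be a Lie algebra over a field and let h: L × L → L⊗L be a universal Lie pairing. Then the submodule L□L spanned by {l⊗l : l ∈ L} is contained in the center of L⊗L; in particular, L□L is a Lie ideal of L⊗L, so the exterior square L∧L := (L⊗L)/(L□L) is a Lie algebra. -/

import Mathlib

universe u v w x

/-- A Lie pairing `ρ : L × L → H` of Lie algebras over a field `F`:
a bilinear map satisfying the three Lie-pairing relations. -/
structure IsLiePairing (F : Type u) [Field F] {L : Type v} {H : Type w}
    [LieRing L] [LieAlgebra F L] [LieRing H] [LieAlgebra F H]
    (ρ : L → L → H) : Prop where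
  add_left : ∀ l l' k : L, ρ (l + l') k = ρ l k + ρ l' k
  add_right : ∀ l k k' : L, ρ l (k + k') = ρ l k + ρ l k'
  smul_left : ∀ (c : F) (l k : L), ρ (c • l) k = c • ρ l k
  smul_right : ∀ (c : F) (l k : L), ρ l (c • k) = c • ρ l k
  bracket_left : ∀ l l' s : L, ρ ⁅l, l'⁆ s = ρ l ⁅l', s⁆ - ρ l' ⁅l, s⁆
  bracket_right : ∀ l s s' : L, ρ l ⁅s, s'⁆ = ρ ⁅s', l⁆ s - ρ ⁅s, l⁆ s'
  bracket_bracket : ∀ l s l' s' : L, ρ ⁅l, s⁆ ⁅l', s'⁆ = -⁅ρ s l, ρ l' s'⁆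

/-- `h : L × L → T` is a universal Lie pairing: `T` plays the role of the
nonabelian tensor square `L ⊗ L`, with `h l l' = l ⊗ l'`. -/
structure IsUniversalLiePairing (F : Type u) [Field F] (L : Type v) (T : Type w)
    [LieRing L] [LieAlgebra F L] [LieRing T] [LieAlgebra F T]
    (h : L → L → T) : Prop where
  isLiePairing : IsLiePairing F h
  universal : ∀ (Q : Type (max u v w)) [LieRing Q] [LieAlgebra F Q]
      (h' : L → L → Q), IsLiePairing F h' →
        ∃! ζ : T →ₗ⁅F⁆ Q, ∀ x y : L, ζ (h x y) = h' x y

/-!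
Relation (iii) with `l' = s'` reads `ρ ⁅b, a⁆ 0 = -⁅ρ a b, ρ l l⁆`, so every `l ⊗ l` commutes with
every generator `a ⊗ b`. Universality makes these generators span `L ⊗ L` as a Lie algebra: the
pairing corestricted to their Lie span factors `L ⊗ L` through that span, and uniqueness forces the
composite with the inclusion to be the identity. Hence `l ⊗ l` is central, and a submodule of the
center is automatically a Lie ideal.
-/

theorem LieAlgebra.mem_center_of_lieSpan_eq_top {R L : Type*} [CommRing R] [LieRing L]
    [LieAlgebra R L] {s : Set L} (hs : LieSubalgebra.lieSpan R L s = ⊤) {z : L}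
    (hz : ∀ y ∈ s, ⁅z, y⁆ = 0) : z ∈ LieAlgebra.center R L := by
  have : LieDerivation.ad R L z = 0 :=
    LieDerivation.ext_of_lieSpan_eq_top s hs fun y hy => by
      simpa using hz y hy
  rwa [← LieDerivation.ad_ker_eq_center, LieHom.mem_ker]

def LieIdeal.ofLeCenter {R L : Type*} [CommRing R] [LieRing L] [LieAlgebra R L]
    (N : Submodule R L) (hN : N ≤ LieAlgebra.center R L) : LieIdeal R L where
  toSubmodule := N
  lie_mem {x m} hm := by
    rw [(LieModule.mem_maxTrivSubmodule R L L m).1 (hN hm) x]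
    exact N.zero_mem

namespace IsLiePairing

variable {F : Type u} [Field F] {L : Type v} {H : Type w} [LieRing L] [LieAlgebra F L]
  [LieRing H] [LieAlgebra F H] {ρ : L → L → H}

theorem comp {Q : Type x} [LieRing Q] [LieAlgebra F Q] (hρ : IsLiePairing F ρ)
    (f : H →ₗ⁅F⁆ Q) : IsLiePairing F (fun a b => f (ρ a b)) where
  add_left l l' k := by rw [hρ.add_left, map_add]
  add_right l k k' := by rw [hρ.add_right, map_add]
  smul_left c l k := by rw [hρ.smul_left, map_smul]
  smul_right c l k := by rw [hρ.smul_right, map_smul]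
  bracket_left l l' s := by rw [hρ.bracket_left, map_sub]
  bracket_right l s s' := by rw [hρ.bracket_right, map_sub]
  bracket_bracket l s l' s' := by rw [hρ.bracket_bracket, map_neg, LieHom.map_lie]

theorem codRestrict (hρ : IsLiePairing F ρ) (S : LieSubalgebra F H) (hS : ∀ a b, ρ a b ∈ S) :
    IsLiePairing F (fun a b => (⟨ρ a b, hS a b⟩ : S)) where
  add_left l l' k := Subtype.ext (hρ.add_left l l' k)
  add_right l k k' := Subtype.ext (hρ.add_right l k k')
  smul_left c l k := Subtype.ext (hρ.smul_left c l k)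
  smul_right c l k := Subtype.ext (hρ.smul_right c l k)
  bracket_left l l' s := Subtype.ext (hρ.bracket_left l l' s)
  bracket_right l s s' := Subtype.ext (hρ.bracket_right l s s')
  bracket_bracket l s l' s' := Subtype.ext (hρ.bracket_bracket l s l' s')

theorem map_zero_right (hρ : IsLiePairing F ρ) (l : L) : ρ l 0 = 0 := by
  simpa using hρ.smul_right 0 l 0

theorem lie_apply_self_eq_zero (hρ : IsLiePairing F ρ) (l a b : L) : ⁅ρ l l, ρ a b⁆ = 0 := by
  have := hρ.bracket_bracket b a l l
  rwa [lie_self, hρ.map_zero_right, eq_comm, neg_eq_zero, ← lie_skew, neg_eq_zero] at this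

end IsLiePairing

namespace IsUniversalLiePairing

variable {F : Type u} [Field F] {L : Type v} {T : Type w} [LieRing L] [LieAlgebra F L]
  [LieRing T] [LieAlgebra F T] {h : L → L → T}

/-- The universal property only quantifies over `Type (max u v w)`; a target in `Type w` is
reached through `ULift`, with the Lie structure transported along `Equiv.ulift`. -/
theorem existsUnique_lieHom (hh : IsUniversalLiePairing F L T h) {Q : Type w} [LieRing Q]
    [LieAlgebra F Q] {h' : L → L → Q} (hh' : IsLiePairing F h') :
    ∃! ζ : T →ₗ⁅F⁆ Q, ∀ x y : L, ζ (h x y) = h' x y := by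
  let e : ULift.{max u v} Q ≃ Q := Equiv.ulift
  let _ := e.lieRing
  let _ := e.lieAlgebra F
  let φ := e.lieEquiv F
  obtain ⟨ζ, hζ, huniq⟩ := hh.universal _ _ (hh'.comp φ.symm.toLieHom)
  refine ⟨φ.toLieHom.comp ζ, fun x y => by simp [hζ], fun ζ' hζ' => ?_⟩
  have : φ.symm.toLieHom.comp ζ' = ζ := huniq _ fun x y => by simp [hζ']
  ext t
  simp [← this]

theorem lieSpan_range_eq_top (hh : IsUniversalLiePairing F L T h) :
    LieSubalgebra.lieSpan F T (Set.range fun q : L × L => h q.1 q.2) = ⊤ := by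
  set S := LieSubalgebra.lieSpan F T (Set.range fun q : L × L => h q.1 q.2)
  have hS (a b : L) : h a b ∈ S := LieSubalgebra.subset_lieSpan ⟨(a, b), rfl⟩
  obtain ⟨ζ, hζ, -⟩ := hh.existsUnique_lieHom (hh.isLiePairing.codRestrict S hS)
  have hid : S.incl.comp ζ = LieHom.id :=
    (hh.existsUnique_lieHom hh.isLiePairing).unique (fun x y => by simp [hζ]) fun _ _ => rfl
  refine eq_top_iff.2 fun t _ => ?_
  rw [← LieHom.id_apply (R := F) t, ← hid]
  exact (ζ t).2

end IsUniversalLiePairing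

/-- The square `L□L`, i.e. the submodule of `L⊗L` spanned by the elements
`l⊗l`, is contained in the center of `L⊗L`; in particular it is (the carrier
of) a Lie ideal of `L⊗L`, so that the exterior square `(L⊗L)/(L□L)` is a
Lie algebra. -/
theorem square_le_center (F : Type u) [Field F] (L : Type v) (T : Type w)
    [LieRing L] [LieAlgebra F L] [LieRing T] [LieAlgebra F T]
    (h : L → L → T) (hh : IsUniversalLiePairing F L T h) :
    Submodule.span F {x : T | ∃ l : L, x = h l l} ≤
        (LieAlgebra.center F T : Submodule F T) ∧
      ∃ I : LieIdeal F T,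
        (I : Submodule F T) = Submodule.span F {x : T | ∃ l : L, x = h l l} := by
  have hcenter : Submodule.span F {x : T | ∃ l : L, x = h l l} ≤
      (LieAlgebra.center F T : Submodule F T) := by
    refine Submodule.span_le.2 ?_
    rintro _ ⟨l, rfl⟩
    refine LieAlgebra.mem_center_of_lieSpan_eq_top hh.lieSpan_range_eq_top ?_
    rintro _ ⟨⟨a, b⟩, rfl⟩
    exact hh.isLiePairing.lie_apply_self_eq_zero l a b
  exact ⟨hcenter, LieIdeal.ofLeCenter _ hcenter, rfl⟩
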